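/- arXiv:2505.00952 — 5 statements merged into one kernel-verified Lean document; each statement's English description precedes it below -/
import Mathlib

section
/- Let G be a finite group, let A be a simple C*-algebra, and let α : G → Aut(A) be an action of G on A which has the weak tracial Rokhlin property. Then for every ε > 0 and every positive element b ∈ A^α with ‖b‖ = 1, there is a positive element x in the closure of b A b with ‖x‖ = 1 such that ‖x · α_g(x)‖ < ε for all g ∈ G with g ≠ 1. -/
/-!
Apply the weak tracial Rokhlin property to `F = {b}` and `x = b` with a small tolerance `δ`.
Because the `f g` are mutually orthogonal and almost commute with `b`, the off-diagonal terms
`f g * b * f h` of `f * b * f` are small, so some diagonal term `f g₀ * b * f g₀` has norm at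
least about `1 / |G|`. The element `x₀ = b * f g₀ ^ 2 * b` of `b A b` is positive with
`‖x₀‖ ≥ ‖f g₀ * b * f g₀‖ ^ 2`, and since `b` is fixed, `α g x₀ ≈ b * f (g * g₀) ^ 2 * b`,
which is almost orthogonal to `x₀` for `g ≠ 1` because `f g₀ * f (g * g₀) = 0`.
Normalizing `x₀` gives `x`.
-/

open Filter Topology

variable {A : Type*} [NonUnitalCStarAlgebra A] [PartialOrder A] [StarOrderedRing A]

/-- `(a - ε)₊`, the positive cut-down of `a`, obtained by applying the continuous
functional calculus with the function `t ↦ max (t - ε) 0`. -/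
noncomputable def cutdown (a : A) (ε : ℝ) : A :=
  cfcₙ (fun t : ℝ => max (t - ε) 0) a

/-- Cuntz subequivalence of `a` and `b`, with the witnessing sequence taken from `S`:
there is a sequence `(w n)` in `S` with `‖w n * b * (w n)⋆ - a‖ → 0`.
Taking `S = Set.univ` gives Cuntz subequivalence in `A`. -/
def CuntzLEIn (S : Set A) (a b : A) : Prop :=
  ∃ w : ℕ → A, (∀ n, w n ∈ S) ∧
    Tendsto (fun n => ‖w n * b * star (w n) - a‖) atTop (𝓝 0)

/-- A C*-algebra is simple if it is nonzero and its only closed two-sided ideals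
are `⊥` and `⊤`. -/
def IsSimpleCStarAlgebra (A : Type*) [NonUnitalCStarAlgebra A] : Prop :=
  (∃ a : A, a ≠ 0) ∧ ∀ I : TwoSidedIdeal A, IsClosed (I : Set A) → I = ⊥ ∨ I = ⊤

/-- The fixed point algebra of an action `α` of `G` on `A`. -/
def fixedPts {G : Type*} (α : G → A ≃⋆ₐ[ℂ] A) : Set A :=
  {a : A | ∀ g : G, α g a = a}

/-- The weak tracial Rokhlin property for an action of a finite group `G` on a simple
C*-algebra `A`: for every `ε > 0`, finite set `F ⊆ A`, and positive `x, y ∈ A` with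
`‖x‖ = 1` there are pairwise orthogonal positive contractions `f g` such that, with
`f = ∑ g, f g`: `f g` almost commutes with `F`, `α g (f h)` is close to `f (g * h)`,
`(y² - y f y - ε)₊ ≾_A x`, and `‖f x f‖ > 1 - ε`. -/
def WeakTracialRokhlin {G : Type*} [Group G] [Fintype G] (α : G → A ≃⋆ₐ[ℂ] A) : Prop :=
  ∀ (ε : ℝ), 0 < ε → ∀ (F : Finset A) (x y : A), 0 ≤ x → 0 ≤ y → ‖x‖ = 1 →
    ∃ f : G → A,
      (∀ g, 0 ≤ f g) ∧ (∀ g, ‖f g‖ ≤ 1) ∧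
      (∀ g h, g ≠ h → f g * f h = 0) ∧
      (∀ g, ∀ a ∈ F, ‖a * f g - f g * a‖ < ε) ∧
      (∀ g h, ‖α g (f h) - f (g * h)‖ < ε) ∧
      CuntzLEIn Set.univ (cutdown (y * y - y * (∑ g : G, f g) * y) ε) x ∧
      ‖(∑ g : G, f g) * x * (∑ g : G, f g)‖ > 1 - ε

section ContractionEstimates

variable {R : Type*} [NonUnitalSeminormedRing R]

lemma norm_mul_le_of_norm_le_one_left {u a : R} (hu : ‖u‖ ≤ 1) : ‖u * a‖ ≤ ‖a‖ := by
  simpa using norm_mul_le_of_le hu le_rfl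

lemma norm_mul_le_of_norm_le_one_right {a u : R} (hu : ‖u‖ ≤ 1) : ‖a * u‖ ≤ ‖a‖ := by
  simpa using norm_mul_le_of_le le_rfl hu

lemma norm_mul_le_one {u v : R} (hu : ‖u‖ ≤ 1) (hv : ‖v‖ ≤ 1) : ‖u * v‖ ≤ 1 :=
  (norm_mul_le_of_norm_le_one_left hu).trans hv

lemma norm_mul_mul_le_norm_commutator_of_mul_eq_zero {u c v : R} (hu : ‖u‖ ≤ 1)
    (huv : u * v = 0) : ‖u * c * v‖ ≤ ‖c * v - v * c‖ := by
  have : u * c * v = u * (c * v - v * c) := by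
    rw [mul_sub, ← mul_assoc, ← mul_assoc, huv, zero_mul, sub_zero]
  rw [this]
  exact norm_mul_le_of_norm_le_one_left hu

lemma norm_commutator_mul_self_le {b v : R} (hb : ‖b‖ ≤ 1) :
    ‖b * b * v - v * (b * b)‖ ≤ 2 * ‖b * v - v * b‖ := by
  have : b * b * v - v * (b * b) = b * (b * v - v * b) + (b * v - v * b) * b := by noncomm_ring
  rw [this, two_mul]
  exact (norm_add_le _ _).trans
    (add_le_add (norm_mul_le_of_norm_le_one_left hb) (norm_mul_le_of_norm_le_one_right hb))

lemma norm_conj_sq_mul_conj_sq_le {b u v w : R} (hb : ‖b‖ ≤ 1) (hu : ‖u‖ ≤ 1) (hw : ‖w‖ ≤ 1)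
    (huv : u * v = 0) :
    ‖b * (u * u) * b * (b * (w * w) * b)‖ ≤ 2 * ‖b * v - v * b‖ + ‖w - v‖ := by
  have hfactor : b * (u * u) * b * (b * (w * w) * b)
      = (b * u) * (u * (b * b) * v + u * b * b * (w - v)) * (w * b) := by noncomm_ring
  have hub : ‖u * b * b‖ ≤ 1 := norm_mul_le_one (norm_mul_le_one hu hb) hb
  rw [hfactor]
  calc _ ≤ ‖u * (b * b) * v + u * b * b * (w - v)‖ :=
        (norm_mul_le_of_norm_le_one_right (norm_mul_le_one hw hb)).trans
          (norm_mul_le_of_norm_le_one_left (norm_mul_le_one hb hu))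
    _ ≤ ‖u * (b * b) * v‖ + ‖u * b * b * (w - v)‖ := norm_add_le _ _
    _ ≤ 2 * ‖b * v - v * b‖ + ‖w - v‖ := add_le_add
        ((norm_mul_mul_le_norm_commutator_of_mul_eq_zero hu huv).trans
          (norm_commutator_mul_self_le hb))
        (norm_mul_le_of_norm_le_one_left hub)

lemma exists_lt_norm_mul_mul_of_lt_norm_sum {ι : Type*} [Fintype ι] [Nonempty ι] (f : ι → R)
    (c : R) {s δ : ℝ} (hδ : 0 ≤ δ) (hoff : ∀ i j, i ≠ j → ‖f i * c * f j‖ ≤ δ)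
    (hs : s < ‖(∑ i, f i) * c * ∑ i, f i‖) :
    ∃ i, s / Fintype.card ι - Fintype.card ι * δ < ‖f i * c * f i‖ := by
  classical
  set K : ℝ := (Fintype.card ι : ℝ)
  have hK : K ≠ 0 := by positivity
  have hrow : ∀ i, ∑ j, ‖f i * c * f j‖ ≤ ‖f i * c * f i‖ + K * δ := by
    intro i
    calc ∑ j, ‖f i * c * f j‖ ≤ ∑ j, ((if i = j then ‖f i * c * f i‖ else 0) + δ) := by
          refine Finset.sum_le_sum fun j _ => ?_
          by_cases hij : i = j
          · subst hij; simpa using hδ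
          · simpa [hij] using hoff i j hij
      _ = ‖f i * c * f i‖ + K * δ := by simp [Finset.sum_add_distrib, K]
  have hsum : ∑ _i : ι, s / K < ∑ i, (‖f i * c * f i‖ + K * δ) := by
    calc ∑ _i : ι, s / K = s := by simp [K, mul_div_cancel₀ s hK]
      _ < ‖∑ i, ∑ j, f i * c * f j‖ := by
          rwa [Finset.sum_mul, Fintype.sum_mul_sum] at hs
      _ ≤ ∑ i, ∑ j, ‖f i * c * f j‖ :=
          (norm_sum_le _ _).trans (Finset.sum_le_sum fun i _ => norm_sum_le _ _)
      _ ≤ _ := Finset.sum_le_sum fun i _ => hrow i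
  obtain ⟨i, -, hi⟩ := Finset.exists_lt_of_sum_lt hsum
  exact ⟨i, by linarith⟩

end ContractionEstimates

lemma sq_norm_mul_mul_le_norm_mul_mul_self_mul {R : Type*} [NonUnitalNormedRing R] [StarRing R]
    [CStarRing R] {b u : R} (hb : IsSelfAdjoint b) (hu : IsSelfAdjoint u) (hu1 : ‖u‖ ≤ 1) :
    ‖u * b * u‖ ^ 2 ≤ ‖b * (u * u) * b‖ := by
  have : b * (u * u) * b = star (u * b) * (u * b) := by
    rw [star_mul, hb.star_eq, hu.star_eq]; noncomm_ring
  rw [this, CStarRing.norm_star_mul_self, ← sq]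
  exact pow_le_pow_left₀ (norm_nonneg _) (norm_mul_le_of_norm_le_one_right hu1) 2

lemma exists_normalized_of_norm_mul_map_le {G : Type*} [One G] (α : G → A ≃⋆ₐ[ℂ] A)
    {b c : A} (hpos : 0 ≤ b * c * b) {m η ε : ℝ} (hm : 0 < m) (hmx : m ≤ ‖b * c * b‖)
    (hη : η < ε * m ^ 2) (hsmall : ∀ g : G, g ≠ 1 → ‖b * c * b * α g (b * c * b)‖ ≤ η) :
    ∃ x ∈ closure {z : A | ∃ c : A, z = b * c * b},
      0 ≤ x ∧ ‖x‖ = 1 ∧ ∀ g : G, g ≠ 1 → ‖x * α g x‖ < ε := by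
  set x₀ := b * c * b
  set r : ℝ := ‖x₀‖⁻¹
  have hx₀ : 0 < ‖x₀‖ := hm.trans_le hmx
  have hr : 0 < r := inv_pos.mpr hx₀
  refine ⟨(r : ℂ) • x₀, subset_closure ⟨(r : ℂ) • c, ?_⟩, ?_, ?_, fun g hg => ?_⟩
  · rw [mul_smul_comm, smul_mul_assoc]
  · rw [Complex.coe_smul]
    exact smul_nonneg hr.le hpos
  · rw [norm_smul, Complex.norm_real, Real.norm_of_nonneg hr.le, inv_mul_cancel₀ hx₀.ne']
  · rw [map_smul, smul_mul_smul_comm, norm_smul, ← Complex.ofReal_mul, Complex.norm_real,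
      Real.norm_of_nonneg (by positivity), ← sq, inv_pow]
    calc (‖x₀‖ ^ 2)⁻¹ * ‖x₀ * α g x₀‖ ≤ (m ^ 2)⁻¹ * η := by
          gcongr
          exact hsmall g hg
      _ < ε := by rwa [inv_mul_lt_iff₀ (by positivity), mul_comm]

-- `δ (1 + K²) ≤ 1/2` keeps the largest diagonal term above `1/(2K)`; the second bound absorbs
-- the factor `(2K)⁴` lost when normalizing.
lemma exists_tolerance {K ε : ℝ} (hK : 0 < K) (hε : 0 < ε) :
    ∃ δ > 0, 1 / (2 * K) ≤ (1 - δ) / K - K * δ ∧ 3 * δ < ε * ((1 / (2 * K)) ^ 2) ^ 2 := by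
  set δ := min (1 / (2 * (1 + K ^ 2))) (ε / (64 * K ^ 4))
  refine ⟨δ, by positivity, ?_, ?_⟩
  · have hδK : δ * (1 + K ^ 2) ≤ 1 / 2 := by
      have := min_le_left (1 / (2 * (1 + K ^ 2))) (ε / (64 * K ^ 4))
      rw [le_div_iff₀ (by positivity)] at this
      linarith
    rw [show (1 - δ) / K - K * δ = (1 - δ * (1 + K ^ 2)) / K by field_simp; ring,
      show 1 / (2 * K) = (1 / 2) / K by ring]
    gcongr
    linarith
  · have : ε * ((1 / (2 * K)) ^ 2) ^ 2 = 4 * (ε / (64 * K ^ 4)) := by field_simp; ring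
    rw [this]
    linarith [min_le_right (1 / (2 * (1 + K ^ 2))) (ε / (64 * K ^ 4)),
      show 0 < ε / (64 * K ^ 4) by positivity]

theorem exists_approx_orthogonal_in_hereditary_general
    {G : Type*} [Group G] [Fintype G]
    (α : G → A ≃⋆ₐ[ℂ] A)
    (hwtrp : WeakTracialRokhlin α)
    (ε : ℝ) (hε : 0 < ε)
    (b : A) (hb : 0 ≤ b) (hb1 : ‖b‖ = 1) (hbfix : b ∈ fixedPts α) :
    ∃ x ∈ closure {z : A | ∃ c : A, z = b * c * b},
      0 ≤ x ∧ ‖x‖ = 1 ∧ ∀ g : G, g ≠ 1 → ‖x * α g x‖ < ε := by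
  set K : ℝ := (Fintype.card G : ℝ)
  obtain ⟨δ, hδ, hδdiag, hδε⟩ := exists_tolerance (K := K) (by positivity) hε
  obtain ⟨f, hf0, hfn, horth, hcomm, hequi, -, hbig⟩ := hwtrp δ hδ {b} b 0 hb le_rfl hb1
  have hcomm_b : ∀ g, ‖b * f g - f g * b‖ ≤ δ := fun g =>
    (hcomm g b (Finset.mem_singleton_self b)).le
  obtain ⟨g₀, hg₀⟩ := exists_lt_norm_mul_mul_of_lt_norm_sum f b hδ.le (fun g h hgh =>
    (norm_mul_mul_le_norm_commutator_of_mul_eq_zero (hfn g) (horth g h hgh)).trans (hcomm_b h))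
    hbig
  have hf₀ : IsSelfAdjoint (f g₀) := .of_nonneg (hf0 g₀)
  refine exists_normalized_of_norm_mul_map_le α (c := f g₀ * f g₀) (m := (1 / (2 * K)) ^ 2)
    (η := 3 * δ) (conjugate_nonneg_of_nonneg hf₀.mul_self_nonneg hb) (by positivity)
    ((pow_le_pow_left₀ (by positivity) (hδdiag.trans hg₀.le) 2).trans
      (sq_norm_mul_mul_le_norm_mul_mul_self_mul (.of_nonneg hb) hf₀ (hfn g₀))) hδε
    fun g hg => ?_
  have hgg₀ : g₀ ≠ g * g₀ := fun h => hg (by simpa using h.symm)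
  simp only [map_mul, hbfix g]
  refine (norm_conj_sq_mul_conj_sq_le (v := f (g * g₀)) hb1.le (hfn g₀)
    (by rw [StarAlgEquiv.norm_map]; exact hfn g₀) (horth _ _ hgg₀)).trans ?_
  linarith [hcomm_b (g * g₀), (hequi g g₀).le]

/-- If a finite group action `α` on a simple C*-algebra `A` has the
weak tracial Rokhlin property, then for every `ε > 0` and every positive `b ∈ A^α`
with `‖b‖ = 1`, there is a positive `x` in the closure of `b A b` with `‖x‖ = 1`
such that `‖x * α g x‖ < ε` for all `g ≠ 1`. -/
theorem exists_approx_orthogonal_in_hereditary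
    {G : Type*} [Group G] [Fintype G]
    (hA : IsSimpleCStarAlgebra A)
    (α : G → A ≃⋆ₐ[ℂ] A) (hα : ∀ g h x, α (g * h) x = α g (α h x))
    (hwtrp : WeakTracialRokhlin α)
    (ε : ℝ) (hε : 0 < ε)
    (b : A) (hb : 0 ≤ b) (hb1 : ‖b‖ = 1) (hbfix : b ∈ fixedPts α) :
    ∃ x ∈ closure {z : A | ∃ c : A, z = b * c * b},
      0 ≤ x ∧ ‖x‖ = 1 ∧ ∀ g : G, g ≠ 1 → ‖x * α g x‖ < ε :=
  exists_approx_orthogonal_in_hereditary_general α hwtrp ε hε b hb hb1 hbfix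
end

section
/- Let f, g : [0, ∞) → [0, ∞) be continuous functions with f(0) = g(0) = 0, let M > 0, and let ε > 0. Then there is δ > 0 such that for every C*-algebra A and all positive elements a, b ∈ A with ‖a‖ ≤ M, ‖b‖ ≤ M, and ‖a b − b a‖ < δ, one has ‖f(a) g(b) − g(b) f(a)‖ < ε. -/
/-!
By the Leibniz rule `[uv, x] = u[v, x] + [u, x]v`, a polynomial `p` without constant term
satisfies `‖[p(a), x]‖ ≤ C ‖[a, x]‖` for self-adjoint `a` with `‖a‖ ≤ M`, where `C` depends only
on the coefficients of `p` and on `M`, not on the C*-algebra. Applying this once in each variable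
gives `‖[p(a), q(b)]‖ ≤ K ‖[a, b]‖`. Since the functional calculus is isometric, Weierstrass
approximation of `f` and `g` on `[0, M]` by such polynomials moves `f(a)` and `g(b)` by a
uniformly small amount, which changes the commutator by a uniformly small amount.
-/

universe u

open Polynomial Set

section Commutator

variable {R : Type*} [NonUnitalNormedRing R]

theorem norm_commutator_le (x y : R) : ‖x * y - y * x‖ ≤ 2 * ‖x‖ * ‖y‖ := by
  calc ‖x * y - y * x‖ ≤ ‖x‖ * ‖y‖ + ‖y‖ * ‖x‖ :=
        (norm_sub_le _ _).trans (add_le_add (norm_mul_le _ _) (norm_mul_le _ _))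
    _ = 2 * ‖x‖ * ‖y‖ := by ring

theorem norm_mul_commutator_le (u v x : R) :
    ‖u * v * x - x * (u * v)‖ ≤ ‖u‖ * ‖v * x - x * v‖ + ‖u * x - x * u‖ * ‖v‖ := by
  have leibniz : u * v * x - x * (u * v) = u * (v * x - x * v) + (u * x - x * u) * v := by
    noncomm_ring
  rw [leibniz]
  exact (norm_add_le _ _).trans (add_le_add (norm_mul_le _ _) (norm_mul_le _ _))

theorem norm_commutator_le_of_approx (x x' y y' : R) :
    ‖x * y - y * x‖ ≤ ‖x' * y' - y' * x'‖ + 2 * ‖x - x'‖ * ‖y'‖ + 2 * ‖x‖ * ‖y - y'‖ := by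
  have split : x * y - y * x = (x' * y' - y' * x') + ((x - x') * y' - y' * (x - x'))
      + (x * (y - y') - (y - y') * x) := by
    noncomm_ring
  rw [split]
  exact norm_add₃_le.trans
    (add_le_add (add_le_add le_rfl (norm_commutator_le _ _)) (norm_commutator_le _ _))

end Commutator

section SelfAdjoint

variable {A : Type*} [NonUnitalCStarAlgebra A]

theorem norm_cfcₙ_pow_succ_le (a : A) (ha : IsSelfAdjoint a) (n : ℕ) :
    ‖cfcₙ (· ^ (n + 1) : ℝ → ℝ) a‖ ≤ ‖a‖ ^ (n + 1) :=
  norm_cfcₙ_le fun t ht => by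
    rw [norm_pow]
    exact pow_le_pow_left₀ (norm_nonneg t)
      (NonUnitalIsometricContinuousFunctionalCalculus.norm_quasispectrum_le a ht) _

theorem norm_commutator_cfcₙ_pow_succ_le (a x : A) (ha : IsSelfAdjoint a) (n : ℕ) :
    ‖cfcₙ (· ^ (n + 1) : ℝ → ℝ) a * x - x * cfcₙ (· ^ (n + 1) : ℝ → ℝ) a‖
      ≤ (n + 1) * ‖a‖ ^ n * ‖a * x - x * a‖ := by
  induction n with
  | zero => simp [cfcₙ_id' ℝ a]
  | succ n ih =>
    have hpow : cfcₙ (· ^ (n + 2) : ℝ → ℝ) a = cfcₙ (· ^ (n + 1) : ℝ → ℝ) a * a := by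
      calc cfcₙ (· ^ (n + 2) : ℝ → ℝ) a = cfcₙ (fun t : ℝ => t ^ (n + 1) * t) a := by
            simp only [pow_succ]
        _ = _ := by rw [cfcₙ_mul (· ^ (n + 1)) (fun t : ℝ => t) a, cfcₙ_id' ℝ a]
    calc _ ≤ ‖cfcₙ (· ^ (n + 1) : ℝ → ℝ) a‖ * ‖a * x - x * a‖
          + ‖cfcₙ (· ^ (n + 1) : ℝ → ℝ) a * x - x * cfcₙ (· ^ (n + 1) : ℝ → ℝ) a‖ * ‖a‖ := by
          rw [hpow]; exact norm_mul_commutator_le _ _ _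
      _ ≤ ‖a‖ ^ (n + 1) * ‖a * x - x * a‖ + (n + 1) * ‖a‖ ^ n * ‖a * x - x * a‖ * ‖a‖ := by
          gcongr; exact norm_cfcₙ_pow_succ_le a ha n
      _ = (↑(n + 1) + 1) * ‖a‖ ^ (n + 1) * ‖a * x - x * a‖ := by push_cast; ring

end SelfAdjoint

/- `fun t => p.eval t - p.eval 0` is `p` shifted to vanish at `0`, the only kind of polynomial
the non-unital calculus can be applied to. -/
theorem exists_norm_commutator_cfcₙ_polynomial_le (p : ℝ[X]) {M : ℝ} (hM : 0 ≤ M) :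
    ∃ C, 0 ≤ C ∧ ∀ (A : Type u) [NonUnitalCStarAlgebra A] (a x : A), IsSelfAdjoint a →
      ‖a‖ ≤ M →
      ‖cfcₙ (fun t => p.eval t - p.eval 0) a * x - x * cfcₙ (fun t => p.eval t - p.eval 0) a‖
        ≤ C * ‖a * x - x * a‖ := by
  induction p using Polynomial.induction_on' with
  | add p q hp hq =>
    obtain ⟨Cp, hCp0, hCp⟩ := hp
    obtain ⟨Cq, hCq0, hCq⟩ := hq
    refine ⟨Cp + Cq, add_nonneg hCp0 hCq0, fun A _ a x ha haM => ?_⟩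
    have hsplit : cfcₙ (fun t => (p + q).eval t - (p + q).eval 0) a
        = cfcₙ (fun t => p.eval t - p.eval 0) a + cfcₙ (fun t => q.eval t - q.eval 0) a := by
      rw [← cfcₙ_add (fun t => p.eval t - p.eval 0) (fun t => q.eval t - q.eval 0) a]
      simp only [eval_add]
      congr 1; ext t; ring
    rw [hsplit, add_mul, mul_add, add_sub_add_comm, add_mul]
    exact (norm_add_le _ _).trans (add_le_add (hCp A a x ha haM) (hCq A a x ha haM))
  | monomial n c =>
    cases n with
    | zero => exact ⟨0, le_rfl, fun A _ a x _ _ => by simp⟩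
    | succ n =>
      refine ⟨|c| * (n + 1) * M ^ n, by positivity, fun A _ a x ha haM => ?_⟩
      have hmono : cfcₙ (fun t => (monomial (n + 1) c).eval t - (monomial (n + 1) c).eval 0) a
          = c • cfcₙ (· ^ (n + 1) : ℝ → ℝ) a := by
        simp only [eval_monomial, zero_pow n.succ_ne_zero, mul_zero, sub_zero]
        exact cfcₙ_const_mul c _ a
      rw [hmono, smul_mul_assoc, mul_smul_comm, ← smul_sub, norm_smul, Real.norm_eq_abs]
      calc |c| * ‖cfcₙ (· ^ (n + 1) : ℝ → ℝ) a * x - x * cfcₙ (· ^ (n + 1) : ℝ → ℝ) a‖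
          ≤ |c| * ((n + 1) * ‖a‖ ^ n * ‖a * x - x * a‖) := by
            gcongr; exact norm_commutator_cfcₙ_pow_succ_le a x ha n
        _ ≤ |c| * ((n + 1) * M ^ n * ‖a * x - x * a‖) := by gcongr
        _ = |c| * (n + 1) * M ^ n * ‖a * x - x * a‖ := by ring

theorem exists_norm_commutator_cfcₙ_polynomial_polynomial_le (p q : ℝ[X]) {M : ℝ}
    (hM : 0 ≤ M) :
    ∃ K, 0 ≤ K ∧ ∀ (A : Type u) [NonUnitalCStarAlgebra A] (a b : A), IsSelfAdjoint a →
      IsSelfAdjoint b → ‖a‖ ≤ M → ‖b‖ ≤ M →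
      ‖cfcₙ (fun t => p.eval t - p.eval 0) a * cfcₙ (fun t => q.eval t - q.eval 0) b
        - cfcₙ (fun t => q.eval t - q.eval 0) b * cfcₙ (fun t => p.eval t - p.eval 0) a‖
        ≤ K * ‖a * b - b * a‖ := by
  obtain ⟨Cp, hCp0, hCp⟩ := exists_norm_commutator_cfcₙ_polynomial_le p hM
  obtain ⟨Cq, hCq0, hCq⟩ := exists_norm_commutator_cfcₙ_polynomial_le q hM
  refine ⟨Cp * Cq, mul_nonneg hCp0 hCq0, fun A _ a b ha hb haM hbM => ?_⟩
  set Q := cfcₙ (fun t => q.eval t - q.eval 0) b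
  calc _ ≤ Cp * ‖a * Q - Q * a‖ := hCp A a Q ha haM
    _ = Cp * ‖Q * a - a * Q‖ := by rw [norm_sub_rev]
    _ ≤ Cp * (Cq * ‖b * a - a * b‖) := by gcongr; exact hCq A b a hb hbM
    _ = Cp * Cq * ‖a * b - b * a‖ := by rw [norm_sub_rev (b * a)]; ring

section Positive

variable {A : Type*} [NonUnitalCStarAlgebra A] [PartialOrder A] [StarOrderedRing A]

theorem quasispectrum_subset_Icc_of_nonneg {a : A} (ha : 0 ≤ a) {M : ℝ} (haM : ‖a‖ ≤ M) :
    quasispectrum ℝ a ⊆ Icc 0 M := fun t ht =>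
  ⟨quasispectrum_nonneg_of_nonneg a ha t ht,
    (le_abs_self t).trans <| (Real.norm_eq_abs t).symm.trans_le <|
      (NonUnitalIsometricContinuousFunctionalCalculus.norm_quasispectrum_le a ht).trans haM⟩

theorem norm_cfcₙ_le_of_nonneg {f : ℝ → ℝ} {M B : ℝ} (hB : ∀ t ∈ Icc 0 M, |f t| ≤ B) {a : A}
    (ha : 0 ≤ a) (haM : ‖a‖ ≤ M) : ‖cfcₙ f a‖ ≤ B :=
  norm_cfcₙ_le fun t ht => hB t (quasispectrum_subset_Icc_of_nonneg ha haM ht)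

theorem norm_cfcₙ_sub_le_of_nonneg {f g : ℝ → ℝ} {M η : ℝ}
    (hf : ContinuousOn f (Icc 0 M)) (hf0 : f 0 = 0) (hg : ContinuousOn g (Icc 0 M))
    (hg0 : g 0 = 0) (hfg : ∀ t ∈ Icc 0 M, |f t - g t| ≤ η) {a : A} (ha : 0 ≤ a)
    (haM : ‖a‖ ≤ M) : ‖cfcₙ f a - cfcₙ g a‖ ≤ η := by
  have hσ := quasispectrum_subset_Icc_of_nonneg ha haM
  rw [← cfcₙ_sub f g a (hf.mono hσ) hf0 (hg.mono hσ) hg0]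
  exact norm_cfcₙ_le_of_nonneg hfg ha haM

end Positive

theorem exists_abs_le_of_continuousOn_Icc {f : ℝ → ℝ} {M : ℝ} (hf : ContinuousOn f (Icc 0 M)) :
    ∃ B, 0 ≤ B ∧ ∀ t ∈ Icc 0 M, |f t| ≤ B := by
  obtain ⟨B, hB⟩ := isCompact_Icc.exists_bound_of_continuousOn hf
  exact ⟨max B 0, le_max_right _ _, fun t ht => (hB t ht).trans (le_max_left _ _)⟩

theorem exists_polynomial_abs_sub_le_of_eq_zero {f : ℝ → ℝ} {M η : ℝ} (hM : 0 ≤ M)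
    (hf : ContinuousOn f (Icc 0 M)) (hf0 : f 0 = 0) (hη : 0 < η) :
    ∃ p : ℝ[X], ∀ t ∈ Icc 0 M, |f t - (p.eval t - p.eval 0)| ≤ η := by
  obtain ⟨p, hp⟩ := exists_polynomial_near_of_continuousOn 0 M f hf (η / 2) (half_pos hη)
  refine ⟨p, fun t ht => ?_⟩
  have h0 := hp 0 ⟨le_rfl, hM⟩
  have ht := hp t ht
  rw [hf0] at h0
  calc |f t - (p.eval t - p.eval 0)| = |(p.eval 0 - 0) - (p.eval t - f t)| := by ring_nf
    _ ≤ |p.eval 0 - 0| + |p.eval t - f t| := abs_sub _ _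
    _ ≤ η := by linarith

theorem exists_polynomial_norm_cfcₙ_sub_le {f : ℝ → ℝ} {M η : ℝ} (hM : 0 ≤ M)
    (hf : ContinuousOn f (Icc 0 M)) (hf0 : f 0 = 0) (hη : 0 < η) :
    ∃ p : ℝ[X], ∀ (A : Type u) [NonUnitalCStarAlgebra A] [PartialOrder A] [StarOrderedRing A]
      (a : A), 0 ≤ a → ‖a‖ ≤ M → ‖cfcₙ f a - cfcₙ (fun t => p.eval t - p.eval 0) a‖ ≤ η := by
  obtain ⟨p, hp⟩ := exists_polynomial_abs_sub_le_of_eq_zero hM hf hf0 hη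
  exact ⟨p, fun A _ _ _ a ha haM => norm_cfcₙ_sub_le_of_nonneg
    (g := fun t => p.eval t - p.eval 0) hf hf0 (by fun_prop) (sub_self _) hp ha haM⟩

theorem exists_pos_error_lt {F G ε : ℝ} (hF : 0 ≤ F) (hG : 0 ≤ G) (hε : 0 < ε) :
    ∃ η, 0 < η ∧ 2 * η * (G + η) + 2 * F * η < ε := by
  set η := min 1 (ε / (4 * (F + G + 1)))
  refine ⟨η, by positivity, ?_⟩
  have hη1 : η ≤ 1 := min_le_left _ _
  calc 2 * η * (G + η) + 2 * F * η ≤ 2 * η * (F + G + 1) := by nlinarith [show 0 < η by positivity]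
    _ ≤ 2 * (ε / (4 * (F + G + 1))) * (F + G + 1) := by gcongr; exact min_le_right _ _
    _ = ε / 2 := by field_simp; ring
    _ < ε := half_lt_self hε

theorem exists_delta_commutator_cfc_general
    (f g : ℝ → ℝ)
    (hf : ContinuousOn f (Set.Ici 0)) (hg : ContinuousOn g (Set.Ici 0))
    (hf0 : f 0 = 0) (hg0 : g 0 = 0)
    (M : ℝ) (hM : 0 < M) (ε : ℝ) (hε : 0 < ε) :
    ∃ δ : ℝ, 0 < δ ∧
      ∀ (A : Type u) [NonUnitalCStarAlgebra A] [PartialOrder A] [StarOrderedRing A],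
        ∀ a b : A, 0 ≤ a → 0 ≤ b → ‖a‖ ≤ M → ‖b‖ ≤ M → ‖a * b - b * a‖ < δ →
          ‖cfcₙ f a * cfcₙ g b - cfcₙ g b * cfcₙ f a‖ < ε := by
  have hfM : ContinuousOn f (Icc 0 M) := hf.mono Icc_subset_Ici_self
  have hgM : ContinuousOn g (Icc 0 M) := hg.mono Icc_subset_Ici_self
  obtain ⟨F, hF0, hF⟩ := exists_abs_le_of_continuousOn_Icc hfM
  obtain ⟨G, hG0, hG⟩ := exists_abs_le_of_continuousOn_Icc hgM
  obtain ⟨η, hη, herr⟩ := exists_pos_error_lt hF0 hG0 (half_pos hε)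
  obtain ⟨p, hp⟩ := exists_polynomial_norm_cfcₙ_sub_le hM.le hfM hf0 hη
  obtain ⟨q, hq⟩ := exists_polynomial_norm_cfcₙ_sub_le hM.le hgM hg0 hη
  obtain ⟨K, hK0, hK⟩ := exists_norm_commutator_cfcₙ_polynomial_polynomial_le p q hM.le
  refine ⟨ε / (2 * (K + 1)), by positivity, fun A _ _ _ a b ha hb haM hbM hab => ?_⟩
  have hpoly : K * ‖a * b - b * a‖ ≤ ε / 2 := calc
    K * ‖a * b - b * a‖ ≤ (K + 1) * (ε / (2 * (K + 1))) := by gcongr; linarith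
    _ = ε / 2 := by field_simp
  have hqb : ‖cfcₙ (fun t => q.eval t - q.eval 0) b‖ ≤ G + η :=
    (norm_le_norm_add_norm_sub' _ _).trans (add_le_add (norm_cfcₙ_le_of_nonneg hG hb hbM)
      ((norm_sub_rev _ _).trans_le (hq A b hb hbM)))
  calc _ ≤ _ := norm_commutator_le_of_approx _ (cfcₙ (fun t => p.eval t - p.eval 0) a) _
          (cfcₙ (fun t => q.eval t - q.eval 0) b)
    _ ≤ K * ‖a * b - b * a‖ + 2 * η * (G + η) + 2 * F * η := by
      gcongr
      · exact hK A a b ha.isSelfAdjoint hb.isSelfAdjoint haM hbM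
      · exact hp A a ha haM
      · exact norm_cfcₙ_le_of_nonneg hF ha haM
      · exact hq A b hb hbM
    _ < ε := by linarith

/-- Let `f, g : [0, ∞) → [0, ∞)` be continuous with `f 0 = g 0 = 0`,
let `M > 0`, and let `ε > 0`.  Then there is `δ > 0`, uniform over all C*-algebras `A`,
such that whenever `a, b ∈ A` are positive with `‖a‖ ≤ M`, `‖b‖ ≤ M` and
`‖a * b - b * a‖ < δ`, one has `‖f(a) * g(b) - g(b) * f(a)‖ < ε`, where `f(a)` and
`g(b)` are defined via the non-unital continuous functional calculus. -/
theorem exists_delta_commutator_cfc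
    (f g : ℝ → ℝ)
    (hf : ContinuousOn f (Set.Ici 0)) (hg : ContinuousOn g (Set.Ici 0))
    (hf0 : f 0 = 0) (hg0 : g 0 = 0)
    (hfpos : ∀ t, 0 ≤ t → 0 ≤ f t) (hgpos : ∀ t, 0 ≤ t → 0 ≤ g t)
    (M : ℝ) (hM : 0 < M) (ε : ℝ) (hε : 0 < ε) :
    ∃ δ : ℝ, 0 < δ ∧
      ∀ (A : Type u) [NonUnitalCStarAlgebra A] [PartialOrder A] [StarOrderedRing A],
        ∀ a b : A, 0 ≤ a → 0 ≤ b → ‖a‖ ≤ M → ‖b‖ ≤ M → ‖a * b - b * a‖ < δ →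
          ‖cfcₙ f a * cfcₙ g b - cfcₙ g b * cfcₙ f a‖ < ε :=
  exists_delta_commutator_cfc_general f g hf hg hf0 hg0 M hM ε hε
end

section
/- Let f, g : [0, ∞) → [0, ∞) be continuous functions with f(0) = g(0) = 0, let ε > 0, and let M > 0. Then there is δ > 0 such that for every C*-algebra A and all positive elements c, d ∈ A with ‖c‖ ≤ M, ‖d‖ ≤ M, and ‖c d − d c‖ < δ, one has ‖(f(d) g(c) f(d))^{1/2} − f(d)^{1/2} g(c)^{1/2} f(d)^{1/2}‖ < ε. -/
/-!
Write `a = f(d)^{1/2}` and `b = g(c)^{1/2}`. Then `f(d) g(c) f(d) = a²b²a²` differs from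
`(aba)²` by `a ((ab - ba) ab - ab (ab - ba)) a`, and `aba ≥ 0` is the square root of `(aba)²`.
So everything reduces to two uniform facts about the functional calculus on positive elements
of norm `≤ K`, both proved by approximating the function uniformly on `[0, K]` by a polynomial
`p`: `‖h(x) y - y h(x')‖` is small when `‖xy - yx'‖` is, since `p(x) y - y p(x')` is a
combination of `xⁿ y - y x'ⁿ = Σ xᵏ (xy - yx') x'ⁿ⁻¹⁻ᵏ`. Taking `x = x'` shows that `h(x)`
almost commutes with whatever `x` almost commutes with (used twice: `[d, c] → [a, c] → [a, b]`);
taking `y = 1` gives uniform continuity of `x ↦ h(x)`, used for the square root.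
Non-unital algebras are handled in their unitization.
-/

universe u

open Set Polynomial

theorem norm_conj_sq_sub_sq_conj_le {R : Type*} [NonUnitalNormedRing R] (a b : R) :
    ‖a * a * (b * b) * (a * a) - a * b * a * (a * b * a)‖ ≤
      2 * ‖a‖ ^ 3 * ‖b‖ * ‖a * b - b * a‖ := calc
  ‖a * a * (b * b) * (a * a) - a * b * a * (a * b * a)‖
      = ‖a * ((a * b - b * a) * (a * b) - (a * b) * (a * b - b * a)) * a‖ := by noncomm_ring
  _ ≤ ‖a‖ * (‖a * b - b * a‖ * (‖a‖ * ‖b‖) + ‖a‖ * ‖b‖ * ‖a * b - b * a‖) * ‖a‖ := by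
      refine norm_mul₃_le.trans ?_
      gcongr
      refine (norm_sub_le _ _).trans (add_le_add ?_ ?_) <;>
        refine (norm_mul_le _ _).trans ?_ <;> gcongr <;> exact norm_mul_le _ _
  _ = 2 * ‖a‖ ^ 3 * ‖b‖ * ‖a * b - b * a‖ := by ring

section NormedRing

variable {R : Type*} [NormedRing R]

theorem norm_pow_succ_mul_sub_mul_pow_succ_le {x x' : R} (y : R) {K : ℝ} (hx : ‖x‖ ≤ K)
    (hx' : ‖x'‖ ≤ K) (n : ℕ) :
    ‖x ^ (n + 1) * y - y * x' ^ (n + 1)‖ ≤ (n + 1) * K ^ n * ‖x * y - y * x'‖ := by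
  induction n with
  | zero => simp
  | succ n ih =>
    have hK : 0 ≤ K := (norm_nonneg x).trans hx
    have hx'n : ‖x' ^ (n + 1)‖ ≤ K ^ (n + 1) :=
      (norm_pow_le' x' n.succ_pos).trans (pow_le_pow_left₀ (norm_nonneg x') hx' _)
    calc ‖x ^ (n + 2) * y - y * x' ^ (n + 2)‖
        = ‖x * (x ^ (n + 1) * y - y * x' ^ (n + 1)) + (x * y - y * x') * x' ^ (n + 1)‖ := by
          rw [pow_succ' x (n + 1), pow_succ' x' (n + 1)]
          simp only [mul_sub, sub_mul, mul_assoc, sub_add_sub_cancel]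
      _ ≤ K * ((n + 1) * K ^ n * ‖x * y - y * x'‖) + ‖x * y - y * x'‖ * K ^ (n + 1) := by
          refine (norm_add_le _ _).trans (add_le_add ?_ ?_) <;>
            refine (norm_mul_le _ _).trans ?_ <;> gcongr
      _ = (↑(n + 1) + 1) * K ^ (n + 1) * ‖x * y - y * x'‖ := by push_cast; ring

theorem norm_pow_mul_sub_mul_pow_le {x x' : R} (y : R) {K : ℝ} (hx : ‖x‖ ≤ K)
    (hx' : ‖x'‖ ≤ K) (n : ℕ) :
    ‖x ^ n * y - y * x' ^ n‖ ≤ n * K ^ (n - 1) * ‖x * y - y * x'‖ := by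
  cases n with
  | zero => simp
  | succ n => simpa using norm_pow_succ_mul_sub_mul_pow_succ_le y hx hx' n

variable [NormedAlgebra ℝ R]

theorem norm_aeval_mul_sub_mul_aeval_le (p : ℝ[X]) {x x' : R} (y : R) {K : ℝ}
    (hx : ‖x‖ ≤ K) (hx' : ‖x'‖ ≤ K) :
    ‖aeval x p * y - y * aeval x' p‖ ≤
      (∑ i ∈ Finset.range (p.natDegree + 1), |p.coeff i| * (i * K ^ (i - 1))) *
        ‖x * y - y * x'‖ := by
  have : aeval x p * y - y * aeval x' p =
      ∑ i ∈ Finset.range (p.natDegree + 1), p.coeff i • (x ^ i * y - y * x' ^ i) := by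
    simp only [aeval_eq_sum_range, Finset.sum_mul, Finset.mul_sum, ← Finset.sum_sub_distrib,
      smul_mul_assoc, mul_smul_comm, smul_sub]
  rw [this, Finset.sum_mul]
  refine (norm_sum_le _ _).trans (Finset.sum_le_sum fun i _ => ?_)
  rw [norm_smul, Real.norm_eq_abs, mul_assoc]
  gcongr
  exact norm_pow_mul_sub_mul_pow_le y hx hx' i

end NormedRing

section CStarAlgebra

variable {B : Type*} [CStarAlgebra B] [PartialOrder B] [StarOrderedRing B]

theorem spectrum_subset_Icc_of_nonneg {x : B} (hx : 0 ≤ x) {K : ℝ} (hxK : ‖x‖ ≤ K) :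
    spectrum ℝ x ⊆ Icc 0 K := fun t ht =>
  ⟨spectrum_nonneg_of_nonneg hx ht, (le_algebraMap_iff_spectrum_le (IsSelfAdjoint.of_nonneg hx)).mp
    ((CStarAlgebra.norm_le_iff_le_algebraMap x ((norm_nonneg x).trans hxK) hx).mp hxK) t ht⟩

theorem norm_cfc_sub_aeval_le {h : ℝ → ℝ} {K δ : ℝ} (hh : ContinuousOn h (Icc 0 K)) {p : ℝ[X]}
    (hδ : 0 ≤ δ) (hp : ∀ t ∈ Icc 0 K, |h t - p.eval t| ≤ δ) {x : B} (hx : 0 ≤ x)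
    (hxK : ‖x‖ ≤ K) : ‖cfc h x - aeval x p‖ ≤ δ := by
  have hσ := spectrum_subset_Icc_of_nonneg hx hxK
  rw [← cfc_polynomial p x, ← cfc_sub h _ x (hh.mono hσ)]
  exact norm_cfc_le hδ fun t ht => hp t (hσ ht)

end CStarAlgebra

theorem exists_norm_cfc_mul_sub_mul_cfc_lt {h : ℝ → ℝ} {K : ℝ} (hh : ContinuousOn h (Icc 0 K))
    (N : ℝ) {ε : ℝ} (hε : 0 < ε) :
    ∃ η > 0, ∀ (B : Type u) [CStarAlgebra B] [PartialOrder B] [StarOrderedRing B] (x x' y : B),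
      0 ≤ x → 0 ≤ x' → ‖x‖ ≤ K → ‖x'‖ ≤ K → ‖y‖ ≤ N → ‖x * y - y * x'‖ < η →
        ‖cfc h x * y - y * cfc h x'‖ < ε := by
  set δ := ε / (4 * (|N| + 1))
  have hδ : 0 < δ := by positivity
  obtain ⟨p, hp⟩ := exists_polynomial_near_of_continuousOn 0 K h hh δ hδ
  replace hp : ∀ t ∈ Icc 0 K, |h t - p.eval t| ≤ δ := fun t ht => by
    rw [abs_sub_comm]; exact (hp t ht).le
  set L := ∑ i ∈ Finset.range (p.natDegree + 1), |p.coeff i| * (i * K ^ (i - 1))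
  have hδN : δ * N ≤ ε / 4 := calc
    δ * N ≤ δ * (|N| + 1) := by gcongr; linarith [le_abs_self N]
    _ = ε / 4 := by simp only [δ]; field_simp
  refine ⟨ε / (2 * (|L| + 1)), by positivity, ?_⟩
  intro B _ _ _ x x' y hx hx' hxK hx'K hyN hxy
  have hpx := norm_cfc_sub_aeval_le hh hδ.le hp hx hxK
  have hpx' := norm_cfc_sub_aeval_le hh hδ.le hp hx' hx'K
  have hLη : L * ‖x * y - y * x'‖ < ε / 2 := calc
    L * ‖x * y - y * x'‖ ≤ |L| * (ε / (2 * (|L| + 1))) := by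
      gcongr; exact le_abs_self L
    _ < ε / 2 := by
      rw [mul_div_assoc', div_lt_div_iff₀ (by positivity) two_pos]; nlinarith [abs_nonneg L]
  calc ‖cfc h x * y - y * cfc h x'‖
      = ‖((cfc h x - aeval x p) * y - y * (cfc h x' - aeval x' p))
          + (aeval x p * y - y * aeval x' p)‖ := by noncomm_ring
    _ ≤ δ * N + N * δ + L * ‖x * y - y * x'‖ := by
      refine (norm_add_le _ _).trans (add_le_add ((norm_sub_le _ _).trans (add_le_add ?_ ?_))
        (norm_aeval_mul_sub_mul_aeval_le p y hxK hx'K)) <;> refine (norm_mul_le _ _).trans ?_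
      · gcongr
      · gcongr; exact (norm_nonneg y).trans hyN
    _ < ε := by linarith

open Unitization

section NonUnital

variable {A : Type*} [NonUnitalCStarAlgebra A] [PartialOrder A] [StarOrderedRing A]

theorem quasispectrum_subset_Icc_of_nonneg_s3 {x : A} (hx : 0 ≤ x) {K : ℝ} (hxK : ‖x‖ ≤ K) :
    quasispectrum ℝ x ⊆ Icc 0 K := by
  rw [quasispectrum_eq_spectrum_inr' ℝ ℂ]
  exact spectrum_subset_Icc_of_nonneg (inr_nonneg_iff.mpr hx) (by rwa [norm_inr])

theorem CFC.sqrt_cfcₙ {h : ℝ → ℝ} {x : A} (hh : ContinuousOn h (quasispectrum ℝ x))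
    (h0 : h 0 = 0) (hpos : ∀ t ∈ quasispectrum ℝ x, 0 ≤ h t) (hx : IsSelfAdjoint x) :
    CFC.sqrt (cfcₙ h x) = cfcₙ (fun t => √(h t)) x := by
  rw [CFC.sqrt_eq_real_sqrt _ (cfcₙ_nonneg hpos), cfcₙ_comp' Real.sqrt h x]

end NonUnital

theorem exists_norm_cfcₙ_mul_sub_mul_cfcₙ_lt {h : ℝ → ℝ} {K : ℝ} (hh : ContinuousOn h (Icc 0 K))
    (h0 : h 0 = 0) (N : ℝ) {ε : ℝ} (hε : 0 < ε) :
    ∃ η > 0, ∀ (A : Type u) [NonUnitalCStarAlgebra A] [PartialOrder A] [StarOrderedRing A]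
      (x y : A), 0 ≤ x → ‖x‖ ≤ K → ‖y‖ ≤ N → ‖x * y - y * x‖ < η →
        ‖cfcₙ h x * y - y * cfcₙ h x‖ < ε := by
  obtain ⟨η, hη, H⟩ := exists_norm_cfc_mul_sub_mul_cfc_lt hh N hε
  refine ⟨η, hη, fun A _ _ _ x y hx hxK hyN hxy => ?_⟩
  have := H (Unitization ℂ A) x x y (inr_nonneg_iff.mpr hx) (inr_nonneg_iff.mpr hx)
    (by rwa [norm_inr]) (by rwa [norm_inr]) (by rwa [norm_inr])
    (by rwa [← inr_mul, ← inr_mul, ← inr_sub, norm_inr])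
  rwa [← real_cfcₙ_eq_cfc_inr x h, ← inr_mul, ← inr_mul, ← inr_sub, norm_inr] at this

theorem exists_norm_cfcₙ_sub_cfcₙ_lt {h : ℝ → ℝ} {K : ℝ} (hh : ContinuousOn h (Icc 0 K))
    (h0 : h 0 = 0) {ε : ℝ} (hε : 0 < ε) :
    ∃ η > 0, ∀ (A : Type u) [NonUnitalCStarAlgebra A] [PartialOrder A] [StarOrderedRing A]
      (x x' : A), 0 ≤ x → 0 ≤ x' → ‖x‖ ≤ K → ‖x'‖ ≤ K → ‖x - x'‖ < η →
        ‖cfcₙ h x - cfcₙ h x'‖ < ε := by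
  obtain ⟨η, hη, H⟩ := exists_norm_cfc_mul_sub_mul_cfc_lt hh 1 hε
  refine ⟨η, hη, fun A _ _ _ x x' hx hx' hxK hx'K hxx' => ?_⟩
  have := H (Unitization ℂ A) x x' 1 (inr_nonneg_iff.mpr hx) (inr_nonneg_iff.mpr hx')
    (by rwa [norm_inr]) (by rwa [norm_inr]) norm_one.le
    (by rwa [mul_one, one_mul, ← inr_sub, norm_inr])
  rwa [← real_cfcₙ_eq_cfc_inr x h, ← real_cfcₙ_eq_cfc_inr x' h, mul_one, one_mul, ← inr_sub,
    norm_inr] at this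

theorem exists_norm_cfcₙ_mul_cfcₙ_sub_cfcₙ_mul_cfcₙ_lt {h₁ h₂ : ℝ → ℝ} {K : ℝ}
    (hh₁ : ContinuousOn h₁ (Icc 0 K)) (hh₂ : ContinuousOn h₂ (Icc 0 K)) (h₁0 : h₁ 0 = 0)
    (h₂0 : h₂ 0 = 0) {ε : ℝ} (hε : 0 < ε) :
    ∃ δ > 0, ∀ (A : Type u) [NonUnitalCStarAlgebra A] [PartialOrder A] [StarOrderedRing A]
      (c d : A), 0 ≤ c → 0 ≤ d → ‖c‖ ≤ K → ‖d‖ ≤ K → ‖c * d - d * c‖ < δ →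
        ‖cfcₙ h₁ d * cfcₙ h₂ c - cfcₙ h₂ c * cfcₙ h₁ d‖ < ε := by
  obtain ⟨B, hB⟩ := isCompact_Icc.exists_bound_of_continuousOn hh₁
  obtain ⟨η, hη, H₂⟩ := exists_norm_cfcₙ_mul_sub_mul_cfcₙ_lt hh₂ h₂0 B hε
  obtain ⟨δ, hδ, H₁⟩ := exists_norm_cfcₙ_mul_sub_mul_cfcₙ_lt hh₁ h₁0 K hη
  refine ⟨δ, hδ, fun A _ _ _ c d hc hd hcK hdK hcd => ?_⟩
  have h₁c : ‖cfcₙ h₁ d * c - c * cfcₙ h₁ d‖ < η :=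
    H₁ A d c hd hdK hcK (by rwa [norm_sub_rev])
  have h₁B : ‖cfcₙ h₁ d‖ ≤ B :=
    norm_cfcₙ_le fun t ht => hB t (quasispectrum_subset_Icc_of_nonneg_s3 hd hdK ht)
  rw [norm_sub_rev]
  exact H₂ A c (cfcₙ h₁ d) hc hcK h₁B (by rwa [norm_sub_rev])

theorem exists_norm_sqrt_conj_sq_sub_conj_lt (Ka Kb : ℝ) {ε : ℝ} (hε : 0 < ε) :
    ∃ η > 0, ∀ (A : Type u) [NonUnitalCStarAlgebra A] [PartialOrder A] [StarOrderedRing A]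
      (a b : A), 0 ≤ a → 0 ≤ b → ‖a‖ ≤ Ka → ‖b‖ ≤ Kb → ‖a * b - b * a‖ < η →
        ‖CFC.sqrt (a * a * (b * b) * (a * a)) - a * b * a‖ < ε := by
  set C := 2 * Ka ^ 3 * Kb
  obtain ⟨η, hη, H⟩ := exists_norm_cfcₙ_sub_cfcₙ_lt (K := Ka * Ka * (Kb * Kb) * (Ka * Ka))
    Real.continuous_sqrt.continuousOn Real.sqrt_zero hε
  refine ⟨η / (|C| + 1), by positivity, fun A _ _ _ a b ha hb haK hbK hab => ?_⟩
  have hz : 0 ≤ a * b * a := conjugate_nonneg_of_nonneg hb ha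
  have hw : 0 ≤ a * a * (b * b) * (a * a) :=
    conjugate_nonneg_of_nonneg (IsSelfAdjoint.of_nonneg hb).mul_self_nonneg
      (IsSelfAdjoint.of_nonneg ha).mul_self_nonneg
  have hwK := norm_mul_le_of_le (norm_mul_le_of_le (norm_mul_le_of_le haK haK)
    (norm_mul_le_of_le hbK hbK)) (norm_mul_le_of_le haK haK)
  have hzK := norm_mul_le_of_le (norm_mul_le_of_le haK hbK) haK
  have hwz : ‖a * a * (b * b) * (a * a) - a * b * a * (a * b * a)‖ < η := calc
    _ ≤ C * ‖a * b - b * a‖ := (norm_conj_sq_sub_sq_conj_le a b).trans <| by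
      have := (norm_nonneg a).trans haK
      simp only [C]; gcongr
    _ ≤ |C| * (η / (|C| + 1)) := by gcongr; exact le_abs_self C
    _ < η := by rw [mul_div_assoc', div_lt_iff₀ (by positivity)]; nlinarith [abs_nonneg C]
  rw [← CFC.sqrt_mul_self (a * b * a) hz, CFC.sqrt_eq_real_sqrt _ hw,
    CFC.sqrt_eq_real_sqrt _ (IsSelfAdjoint.of_nonneg hz).mul_self_nonneg]
  exact H A _ _ hw (IsSelfAdjoint.of_nonneg hz).mul_self_nonneg hwK
    ((norm_mul_le_of_le hzK hzK).trans_eq (by ring)) hwz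

theorem exists_delta_sqrt_commutator_cfc_general
    (f g : ℝ → ℝ)
    (hf : ContinuousOn f (Set.Ici 0)) (hg : ContinuousOn g (Set.Ici 0))
    (hf0 : f 0 = 0) (hg0 : g 0 = 0)
    (hfpos : ∀ t, 0 ≤ t → 0 ≤ f t) (hgpos : ∀ t, 0 ≤ t → 0 ≤ g t)
    (ε : ℝ) (hε : 0 < ε) (M : ℝ) :
    ∃ δ : ℝ, 0 < δ ∧
      ∀ (A : Type u) [NonUnitalCStarAlgebra A] [PartialOrder A] [StarOrderedRing A],
        ∀ c d : A, 0 ≤ c → 0 ≤ d → ‖c‖ ≤ M → ‖d‖ ≤ M → ‖c * d - d * c‖ < δ →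
          ‖CFC.sqrt (cfcₙ f d * cfcₙ g c * cfcₙ f d) -
              CFC.sqrt (cfcₙ f d) * CFC.sqrt (cfcₙ g c) * CFC.sqrt (cfcₙ f d)‖ < ε := by
  have hsf : ContinuousOn (fun t => √(f t)) (Icc 0 M) := (hf.mono Icc_subset_Ici_self).sqrt
  have hsg : ContinuousOn (fun t => √(g t)) (Icc 0 M) := (hg.mono Icc_subset_Ici_self).sqrt
  obtain ⟨Ka, hKa⟩ := isCompact_Icc.exists_bound_of_continuousOn hsf
  obtain ⟨Kb, hKb⟩ := isCompact_Icc.exists_bound_of_continuousOn hsg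
  obtain ⟨η, hη, Hsqrt⟩ := exists_norm_sqrt_conj_sq_sub_conj_lt Ka Kb hε
  obtain ⟨δ, hδ, Hcomm⟩ :=
    exists_norm_cfcₙ_mul_cfcₙ_sub_cfcₙ_mul_cfcₙ_lt hsf hsg (by simp [hf0]) (by simp [hg0]) hη
  refine ⟨δ, hδ, fun A _ _ _ c d hc hd hcM hdM hcd => ?_⟩
  have hσ {x : A} (hx : 0 ≤ x) : quasispectrum ℝ x ⊆ Ici 0 := quasispectrum_nonneg_of_nonneg x hx
  have ha : CFC.sqrt (cfcₙ f d) = cfcₙ (fun t => √(f t)) d :=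
    CFC.sqrt_cfcₙ (hf.mono (hσ hd)) hf0 (fun t ht => hfpos t (hσ hd ht)) (.of_nonneg hd)
  have hb : CFC.sqrt (cfcₙ g c) = cfcₙ (fun t => √(g t)) c :=
    CFC.sqrt_cfcₙ (hg.mono (hσ hc)) hg0 (fun t ht => hgpos t (hσ hc ht)) (.of_nonneg hc)
  have haK : ‖CFC.sqrt (cfcₙ f d)‖ ≤ Ka :=
    ha ▸ norm_cfcₙ_le fun t ht => hKa t (quasispectrum_subset_Icc_of_nonneg_s3 hd hdM ht)
  have hbK : ‖CFC.sqrt (cfcₙ g c)‖ ≤ Kb :=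
    hb ▸ norm_cfcₙ_le fun t ht => hKb t (quasispectrum_subset_Icc_of_nonneg_s3 hc hcM ht)
  have := Hsqrt A _ _ (CFC.sqrt_nonneg _) (CFC.sqrt_nonneg _) haK hbK
    (by rw [ha, hb]; exact Hcomm A c d hc hd hcM hdM hcd)
  rwa [CFC.sqrt_mul_sqrt_self _ (cfcₙ_nonneg fun t ht => hfpos t (hσ hd ht)),
    CFC.sqrt_mul_sqrt_self _ (cfcₙ_nonneg fun t ht => hgpos t (hσ hc ht))] at this

/-- Let `f, g : [0, ∞) → [0, ∞)` be continuous with `f 0 = g 0 = 0`,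
let `ε > 0` and `M > 0`.  Then there is `δ > 0`, uniform over all C*-algebras `A`,
such that whenever `c, d ∈ A` are positive with `‖c‖ ≤ M`, `‖d‖ ≤ M` and
`‖c * d - d * c‖ < δ`, one has
`‖(f(d) g(c) f(d))^(1/2) - f(d)^(1/2) g(c)^(1/2) f(d)^(1/2)‖ < ε`,
where functions of positive elements are defined via the non-unital continuous
functional calculus and `CFC.sqrt` is the positive square root. -/
theorem exists_delta_sqrt_commutator_cfc
    (f g : ℝ → ℝ)
    (hf : ContinuousOn f (Set.Ici 0)) (hg : ContinuousOn g (Set.Ici 0))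
    (hf0 : f 0 = 0) (hg0 : g 0 = 0)
    (hfpos : ∀ t, 0 ≤ t → 0 ≤ f t) (hgpos : ∀ t, 0 ≤ t → 0 ≤ g t)
    (ε : ℝ) (hε : 0 < ε) (M : ℝ) (hM : 0 < M) :
    ∃ δ : ℝ, 0 < δ ∧
      ∀ (A : Type u) [NonUnitalCStarAlgebra A] [PartialOrder A] [StarOrderedRing A],
        ∀ c d : A, 0 ≤ c → 0 ≤ d → ‖c‖ ≤ M → ‖d‖ ≤ M → ‖c * d - d * c‖ < δ →
          ‖CFC.sqrt (cfcₙ f d * cfcₙ g c * cfcₙ f d) -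
              CFC.sqrt (cfcₙ f d) * CFC.sqrt (cfcₙ g c) * CFC.sqrt (cfcₙ f d)‖ < ε :=
  exists_delta_sqrt_commutator_cfc_general f g hf hg hf0 hg0 hfpos hgpos ε hε M
end

section
/- Let A be a C*-algebra, let ε > 0, and let a ∈ A be positive with ‖a‖ ≤ 1. Then for every y ∈ A one has (y y* − y a y* − ε)₊ ≾_A (y y* − y a² y* − ε)₊ ≾_A (y y* − y a y* − ε/2)₊. -/
/-!
Put `b = y y⋆ - y a y⋆` and `c = y y⋆ - y a² y⋆`. Since `c - b = y (a - a²) y⋆` with `a² ≤ a`, and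
`2b - c = (y - y a)(y - y a)⋆`, we have `0 ≤ b ≤ c ≤ 2b`. Both relations then follow from the
monotonicity `(b - ε)₊ ≾ (c - ε)₊` for `0 ≤ b ≤ c`, using `(2b - ε)₊ = 2 (b - ε/2)₊`.

For the monotonicity write `c = (c - ε)₊ + m` with `‖m‖ ≤ ε`. The cut-down `p = (b - ε)₊` satisfies
`p (b - ε) p = p³`, hence `p³ ≤ p (c - ε)₊ p`; and `p ≾ p³` because `p` and `p³` have the same
support. That `x ≤ y` implies `x ≾ y` comes from conjugating `y` by `√x (y + t)^(-1/2)` in the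
unitization and letting `t → 0`.
-/

open Filter Topology

variable {A : Type*} [NonUnitalCStarAlgebra A] [PartialOrder A] [StarOrderedRing A]

/-- Cuntz subequivalence in `A`: there is a sequence `(w n)` in `A` with
`‖w n * b * (w n)⋆ - a‖ → 0`. -/
def CuntzLE (a b : A) : Prop :=
  ∃ w : ℕ → A, Tendsto (fun n => ‖w n * b * star (w n) - a‖) atTop (𝓝 0)

set_option linter.unusedSectionVars false

theorem cuntzLE_iff_forall_exists_norm_lt {x q : A} :
    CuntzLE x q ↔ ∀ δ > 0, ∃ w : A, ‖w * q * star w - x‖ < δ := by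
  constructor
  · rintro ⟨w, hw⟩ δ hδ
    obtain ⟨n, hn⟩ := (hw.eventually (gt_mem_nhds hδ)).exists
    exact ⟨w n, hn⟩
  · intro h
    choose w hw using fun n : ℕ => h (1 / (n + 1)) Nat.one_div_pos_of_nat
    exact ⟨w, squeeze_zero (fun _ => norm_nonneg _) (fun n => (hw n).le)
      tendsto_one_div_add_atTop_nhds_zero_nat⟩

theorem cuntzLE_conj (r q : A) : CuntzLE (r * q * star r) q :=
  ⟨fun _ => r, by simp⟩

theorem CuntzLE.trans {x y z : A} (hxy : CuntzLE x y) (hyz : CuntzLE y z) : CuntzLE x z := by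
  rw [cuntzLE_iff_forall_exists_norm_lt] at hxy ⊢
  intro δ hδ
  obtain ⟨u, hu⟩ := hxy (δ / 2) (half_pos hδ)
  obtain ⟨v, hv⟩ := hyz
  have hconj : Tendsto (fun n => u * (v n * z * star (v n)) * star u) atTop
      (𝓝 (u * y * star u)) :=
    ((tendsto_iff_norm_sub_tendsto_zero.2 hv).const_mul u).mul_const _
  obtain ⟨n, hn⟩ := (hconj.eventually (Metric.ball_mem_nhds _ (half_pos hδ))).exists
  refine ⟨u * v n, ?_⟩
  rw [dist_eq_norm] at hn
  calc ‖u * v n * z * star (u * v n) - x‖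
      = ‖(u * (v n * z * star (v n)) * star u - u * y * star u) + (u * y * star u - x)‖ := by
        rw [star_mul]; noncomm_ring
    _ ≤ ‖u * (v n * z * star (v n)) * star u - u * y * star u‖ + ‖u * y * star u - x‖ :=
        norm_add_le _ _
    _ < δ := by linarith

theorem CuntzLE.of_smul {x q : A} {t : ℝ} (ht : 0 ≤ t) (h : CuntzLE x (t • q)) :
    CuntzLE x q := by
  obtain ⟨w, hw⟩ := h
  refine ⟨fun n => √t • w n, ?_⟩
  convert hw using 4 with n
  rw [star_smul, star_trivial, smul_mul_assoc, smul_mul_assoc, mul_smul_comm, smul_smul,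
    Real.mul_self_sqrt ht, mul_smul_comm, smul_mul_assoc]

section Unital

variable {B : Type*} [CStarAlgebra B] [PartialOrder B] [StarOrderedRing B]

theorem exists_norm_conj_sub_mul_star_le {s y : B} (hsy : star s * s ≤ y) {t : ℝ} (ht : 0 < t) :
    ∃ R : B, ‖s * R * y * star (s * R) - s * star s‖ ≤ t := by
  have hy : 0 ≤ y := (star_mul_self_nonneg s).trans hsy
  have hpos : ∀ u ∈ spectrum ℝ y, 0 < u + t := fun u hu => by
    linarith [spectrum_nonneg_of_nonneg hy hu]
  set k : ℝ → ℝ := fun u => (√(u + t))⁻¹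
  have hk : ContinuousOn k (spectrum ℝ y) :=
    (Real.continuous_sqrt.comp_continuousOn (by fun_prop)).inv₀ fun u hu =>
      (Real.sqrt_pos.2 (hpos u hu)).ne'
  have hinv : ContinuousOn (fun u => (u + t)⁻¹) (spectrum ℝ y) :=
    (continuous_add_const t).continuousOn.inv₀ fun u hu => (hpos u hu).ne'
  set R := cfc k y
  have hR : star R = R := (IsSelfAdjoint.cfc (f := k) (a := y)).star_eq
  have hRR : R * R = cfc (fun u => (u + t)⁻¹) y := by
    rw [← cfc_mul k k y]
    refine cfc_congr fun u hu => ?_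
    rw [← mul_inv, Real.mul_self_sqrt (hpos u hu).le]
  have hRyR : R * y * R = cfc (fun u => u * (u + t)⁻¹) y := by
    conv_lhs => rw [← cfc_id' ℝ y]
    rw [← cfc_mul k _ y, ← cfc_mul _ k y]
    refine cfc_congr fun u hu => ?_
    rw [mul_comm (k u) u, mul_assoc, ← mul_inv, Real.mul_self_sqrt (hpos u hu).le]
  have hunit : t • (R * R) + R * y * R = 1 := by
    rw [hRR, hRyR, ← cfc_smul t _ y hinv,
      ← cfc_add (a := y) (fun u => t • (u + t)⁻¹) (fun u => u * (u + t)⁻¹) (hinv.const_smul t)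
        (continuousOn_id.mul hinv),
      ← cfc_const_one ℝ y]
    refine cfc_congr fun u hu => ?_
    have := (hpos u hu).ne'
    simp only [smul_eq_mul]
    field_simp
    ring
  have hnorm : ‖R * y * R‖ ≤ 1 := by
    rw [hRyR]
    refine norm_cfc_le zero_le_one fun u hu => ?_
    have := hpos u hu
    rw [Real.norm_of_nonneg (by have := spectrum_nonneg_of_nonneg hy hu; positivity),
      ← div_eq_mul_inv, div_le_one this]
    linarith
  refine ⟨R, ?_⟩
  have hdiff : s * R * y * star (s * R) - s * star s = -(t • ((s * R) * star (s * R))) := by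
    have hss : s * star s = s * (t • (R * R) + R * y * R) * star s := by rw [hunit, mul_one]
    rw [hss, star_mul, hR]
    simp only [mul_add, add_mul, mul_smul_comm, smul_mul_assoc, mul_assoc]
    abel
  have hconj : star (s * R) * (s * R) ≤ R * y * R := by
    simpa [star_mul, hR, mul_assoc] using star_left_conjugate_le_conjugate hsy R
  calc ‖s * R * y * star (s * R) - s * star s‖ = t * ‖star (s * R) * (s * R)‖ := by
        rw [hdiff, norm_neg, norm_smul, Real.norm_of_nonneg ht.le, CStarRing.norm_self_mul_star,
          CStarRing.norm_star_mul_self]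
    _ ≤ t * ‖R * y * R‖ := by
        gcongr
        exact CStarAlgebra.norm_le_norm_of_nonneg_of_le (star_mul_self_nonneg _) hconj
    _ ≤ t := mul_le_of_le_one_right ht.le hnorm

end Unital

theorem cuntzLE_mul_star_of_star_mul_le {s y : A} (h : star s * s ≤ y) :
    CuntzLE (s * star s) y := by
  rw [cuntzLE_iff_forall_exists_norm_lt]
  intro δ hδ
  have h' : star (s : Unitization ℂ A) * s ≤ y := by
    simpa [sub_nonneg] using Unitization.inr_nonneg_iff.2 (sub_nonneg.2 h)
  obtain ⟨R, hR⟩ := exists_norm_conj_sub_mul_star_le h' (half_pos hδ)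
  set w := ((s : Unitization ℂ A) * R).snd
  have hw : (w : Unitization ℂ A) = s * R := Unitization.ext (by simp) rfl
  refine ⟨w, ?_⟩
  rw [← Unitization.norm_inr (𝕜 := ℂ)]
  push_cast
  rw [hw]
  exact hR.trans_lt (half_lt_self hδ)

theorem CuntzLE.of_le {x y : A} (hx : 0 ≤ x) (hxy : x ≤ y) : CuntzLE x y := by
  have hs : star (CFC.sqrt x) = CFC.sqrt x := (CFC.sqrt_nonneg x).isSelfAdjoint.star_eq
  simpa [hs, CFC.sqrt_mul_sqrt_self x hx] using
    cuntzLE_mul_star_of_star_mul_le (s := CFC.sqrt x) (by rwa [hs, CFC.sqrt_mul_sqrt_self x hx])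

theorem cutdown_nonneg (b : A) (ε : ℝ) : 0 ≤ cutdown b ε :=
  cfcₙ_nonneg fun _ _ => le_max_right _ _

theorem norm_cutdown_sub_self_le {x : A} (hx : 0 ≤ x) {ε : ℝ} (hε : 0 ≤ ε) :
    ‖cutdown x ε - x‖ ≤ ε := by
  have hP0 : max ((0 : ℝ) - ε) 0 = 0 := by simp [hε]
  have h : cfcₙ (fun t : ℝ => max (t - ε) 0 - t) x = cutdown x ε - x := by
    rw [cfcₙ_sub _ _ x, cfcₙ_id' ℝ x, cutdown]
  rw [← h]
  refine norm_cfcₙ_le fun t ht => ?_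
  have := quasispectrum_nonneg_of_nonneg x hx t ht
  rw [Real.norm_eq_abs, abs_le]
  cases max_cases (t - ε) 0 <;> constructor <;> linarith

theorem cutdown_mul_sub_smul {b : A} (hb : IsSelfAdjoint b) {ε : ℝ} (hε : 0 ≤ ε) :
    cutdown b ε * b - ε • cutdown b ε = cutdown b ε * cutdown b ε := by
  have hP0 : max ((0 : ℝ) - ε) 0 = 0 := by simp [hε]
  have h : cfcₙ (fun t : ℝ => max (t - ε) 0 * t - ε * max (t - ε) 0) b
      = cutdown b ε * b - ε • cutdown b ε := by
    rw [cfcₙ_sub _ _ b, cfcₙ_mul _ _ b, cfcₙ_id' ℝ b, cfcₙ_const_mul _ _ b, cutdown]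
  rw [← h, cutdown, ← cfcₙ_mul _ _ b]
  refine cfcₙ_congr fun t _ => ?_
  rcases max_cases (t - ε) 0 with ⟨h, -⟩ | ⟨h, -⟩ <;> rw [h] <;> ring

theorem cutdown_smul {b : A} (hb : IsSelfAdjoint b) {t ε : ℝ} (ht : 0 ≤ t) (hε : 0 ≤ ε) :
    cutdown (t • b) (t * ε) = t • cutdown b ε := by
  have hP0 : max ((0 : ℝ) - ε) 0 = 0 := by simp [hε]
  have htε : 0 ≤ t * ε := mul_nonneg ht hε
  rw [cutdown, cutdown, ← cfcₙ_comp_smul t _ b, ← cfcₙ_smul t _ b]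
  refine cfcₙ_congr fun s _ => ?_
  simp only [smul_eq_mul, ← mul_sub, mul_max_of_nonneg _ _ ht, mul_zero]

theorem cuntzLE_cfcₙ_self {x : A} (hx : 0 ≤ x) {f : ℝ → ℝ} (hf : Continuous f) (hf0 : f 0 = 0)
    (hpos : ∀ t, 0 < t → 0 < f t) : CuntzLE x (cfcₙ f x) := by
  rw [cuntzLE_iff_forall_exists_norm_lt]
  intro δ hδ
  set η := δ / 2
  have hη : 0 < η := half_pos hδ
  -- `max t η` keeps the denominator positive and equals `t` wherever `(t - η)₊ ≠ 0`.
  set K : ℝ → ℝ := fun t => √(max (t - η) 0 / f (max t η))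
  have hK : Continuous K :=
    Real.continuous_sqrt.comp <| (by fun_prop : Continuous fun t => max (t - η) 0).div
      (hf.comp (by fun_prop)) fun t => (hpos _ (hη.trans_le (le_max_right t η))).ne'
  have hK0 : K 0 = 0 := by simp [K, hη.le]
  have hw : cfcₙ K x * cfcₙ f x * star (cfcₙ K x) = cutdown x η := by
    rw [(IsSelfAdjoint.cfcₙ (f := K) (a := x)).star_eq,
      ← cfcₙ_mul K f x hK.continuousOn hK0 hf.continuousOn hf0,
      ← cfcₙ_mul (fun t => K t * f t) K x (hK.mul hf).continuousOn (by simp [hK0])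
        hK.continuousOn hK0, cutdown]
    refine cfcₙ_congr fun t _ => ?_
    rcases le_or_gt t η with h | h
    · simp [K, max_eq_right (sub_nonpos.2 h)]
    · rw [mul_right_comm, Real.mul_self_sqrt (div_nonneg (le_max_right _ _)
        (hpos _ (hη.trans_le (le_max_right t η))).le), max_eq_left h.le,
        div_mul_cancel₀ _ (hpos t (hη.trans h)).ne']
  refine ⟨cfcₙ K x, ?_⟩
  rw [hw]
  exact (norm_cutdown_sub_self_le hx hη.le).trans_lt (half_lt_self hδ)

theorem cutdown_cuntzLE_of_le_add {b q m : A} {ε : ℝ} (hε : 0 ≤ ε) (hb : IsSelfAdjoint b)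
    (hm : IsSelfAdjoint m) (hmε : ‖m‖ ≤ ε) (hbqm : b ≤ q + m) : CuntzLE (cutdown b ε) q := by
  set p := cutdown b ε
  have hp0 : 0 ≤ p := cutdown_nonneg b ε
  have hp : star p = p := hp0.isSelfAdjoint.star_eq
  have hcube : cfcₙ (fun t : ℝ => t * t * t) p = p * p * p := by
    rw [cfcₙ_mul _ _ p, cfcₙ_mul _ _ p, cfcₙ_id' ℝ p]
  have hpmp : p * m * p ≤ ε • (p * p) := by
    calc p * m * p ≤ ‖m‖ • (p * p) := by
          simpa [hp] using CStarAlgebra.star_left_conjugate_le_norm_smul (a := p) hm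
      _ ≤ ε • (p * p) :=
          smul_le_smul_of_nonneg_right hmε (by simpa [hp] using star_mul_self_nonneg p)
  have hppp : p * p * p ≤ p * q * p :=
    calc p * p * p = p * b * p - ε • (p * p) := by
          rw [← smul_mul_assoc, ← sub_mul, cutdown_mul_sub_smul hb hε]
      _ ≤ p * (q + m) * p - ε • (p * p) := by
          gcongr
          simpa [hp] using star_left_conjugate_le_conjugate hbqm p
      _ = p * q * p + (p * m * p - ε • (p * p)) := by noncomm_ring
      _ ≤ p * q * p := add_le_of_nonpos_right (sub_nonpos.2 hpmp)
  have hcube_le : CuntzLE p (p * p * p) :=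
    hcube ▸ cuntzLE_cfcₙ_self hp0 (by fun_prop) (by simp) fun t ht => by positivity
  refine (hcube_le.trans (CuntzLE.of_le ?_ hppp)).trans (by simpa [hp] using cuntzLE_conj p q)
  simpa [hp] using star_left_conjugate_nonneg hp0 p

theorem cutdown_cuntzLE_cutdown_of_le {b c : A} {ε : ℝ} (hε : 0 ≤ ε) (hc : 0 ≤ c) (hbc : b ≤ c) :
    CuntzLE (cutdown b ε) (cutdown c ε) :=
  cutdown_cuntzLE_of_le_add hε
    (by simpa using hc.isSelfAdjoint.sub (sub_nonneg.2 hbc).isSelfAdjoint)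
    (hc.isSelfAdjoint.sub (cutdown_nonneg c ε).isSelfAdjoint)
    (by rw [norm_sub_rev]; exact norm_cutdown_sub_self_le hc hε) (by rwa [add_sub_cancel])

theorem mul_self_le_self_of_norm_le_one {a : A} (ha : 0 ≤ a) (ha1 : ‖a‖ ≤ 1) : a * a ≤ a := by
  set s := CFC.sqrt a
  have hs : star s = s := (CFC.sqrt_nonneg a).isSelfAdjoint.star_eq
  have hss : s * s = a := CFC.sqrt_mul_sqrt_self a ha
  calc a * a = star s * a * s := by rw [hs, ← hss]; simp only [mul_assoc]
    _ ≤ ‖a‖ • (star s * s) := CStarAlgebra.star_left_conjugate_le_norm_smul ha.isSelfAdjoint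
    _ = ‖a‖ • a := by rw [hs, hss]
    _ ≤ a := smul_le_of_le_one_left ha ha1

/-- Let `A` be a C*-algebra, `ε > 0`, and let `a ∈ A` be positive with
`‖a‖ ≤ 1`.  Then for every `y ∈ A`,
`(y y⋆ - y a y⋆ - ε)₊ ≾_A (y y⋆ - y a² y⋆ - ε)₊ ≾_A (y y⋆ - y a y⋆ - ε/2)₊`. -/
theorem cutdown_cuntzLE_sq
    (ε : ℝ) (hε : 0 < ε) (a : A) (ha : 0 ≤ a) (ha1 : ‖a‖ ≤ 1) (y : A) :
    CuntzLE (cutdown (y * star y - y * a * star y) ε)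
        (cutdown (y * star y - y * (a * a) * star y) ε) ∧
      CuntzLE (cutdown (y * star y - y * (a * a) * star y) ε)
        (cutdown (y * star y - y * a * star y) (ε / 2)) := by
  set b := y * star y - y * a * star y
  set c := y * star y - y * (a * a) * star y
  have hbc : b ≤ c := by
    rw [← sub_nonneg, show c - b = y * (a - a * a) * star y by simp only [b, c]; noncomm_ring]
    exact star_right_conjugate_nonneg (sub_nonneg.2 (mul_self_le_self_of_norm_le_one ha ha1)) y
  have hcb : c ≤ (2 : ℝ) • b := by
    rw [← sub_nonneg, show (2 : ℝ) • b - c = (y - y * a) * star (y - y * a) by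
      simp only [b, c, two_smul, star_sub, star_mul, ha.isSelfAdjoint.star_eq]; noncomm_ring]
    exact mul_star_self_nonneg _
  have hb : 0 ≤ b := by
    rw [two_smul] at hcb
    simpa using sub_nonneg.2 (hbc.trans hcb)
  have hsmul : cutdown ((2 : ℝ) • b) ε = (2 : ℝ) • cutdown b (ε / 2) := by
    rw [← cutdown_smul hb.isSelfAdjoint zero_le_two (half_pos hε).le,
      mul_div_cancel₀ _ two_ne_zero]
  refine ⟨cutdown_cuntzLE_cutdown_of_le hε.le (hb.trans hbc) hbc, .of_smul zero_le_two ?_⟩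
  exact hsmul ▸ cutdown_cuntzLE_cutdown_of_le hε.le (smul_nonneg zero_le_two hb) hcb
end

section
/- Let A be a C*-algebra, let G be a finite group, and let α : G → Aut(A) be an action of G on A. Then the fixed point algebra A^α contains an approximate unit for A: for every finite set F ⊆ A and every ε > 0 there exists a positive element v ∈ A^α with ‖v‖ ≤ 1 such that ‖v a − a‖ < ε and ‖a v − a‖ < ε for all a ∈ F. -/
open Filter Topology

/-!
Pick `u` in the approximate unit of `A` that works up to `ε` for every `(α g)⁻¹ a` with `g ∈ G`
and `a ∈ F`, and average it over the orbit: `v = |G|⁻¹ ∑_g α g u`. The average is `G`-invariant,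
and each of the conditions `0 ≤ v`, `‖v‖ ≤ 1`, `‖v a - a‖ < ε`, `‖a v - a‖ < ε` cuts out a
convex set containing every `α g u` (the automorphisms are isometric and order preserving), hence
containing their average.
-/

variable {A : Type*} [NonUnitalCStarAlgebra A] [PartialOrder A] [StarOrderedRing A]

theorem Convex.inv_card_smul_sum_mem {ι E : Type*} [Fintype ι] [Nonempty ι] [AddCommGroup E]
    [Module ℝ E] {s : Set E} (hs : Convex ℝ s) {z : ι → E} (hz : ∀ i, z i ∈ s) :
    (Fintype.card ι : ℝ)⁻¹ • ∑ i, z i ∈ s := by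
  rw [Finset.smul_sum]
  refine hs.sum_mem (fun _ _ => by positivity) ?_ fun i _ => hz i
  simp [Finset.card_univ]

section Convexity

variable {B : Type*} [NonUnitalSeminormedRing B] [NormedSpace ℝ B]

theorem convex_setOf_norm_mul_sub_lt [IsScalarTower ℝ B B] (a : B) (ε : ℝ) :
    Convex ℝ {v : B | ‖v * a - a‖ < ε} := by
  simpa only [Set.preimage, LinearMap.mulRight_apply, Metric.mem_ball, dist_eq_norm] using
    (convex_ball a ε).is_linear_preimage (LinearMap.mulRight ℝ a).isLinear

theorem convex_setOf_norm_mul_sub_lt' [SMulCommClass ℝ B B] (a : B) (ε : ℝ) :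
    Convex ℝ {v : B | ‖a * v - a‖ < ε} := by
  simpa only [Set.preimage, LinearMap.mulLeft_apply, Metric.mem_ball, dist_eq_norm] using
    (convex_ball a ε).is_linear_preimage (LinearMap.mulLeft ℝ a).isLinear

end Convexity

section Automorphisms

variable {B : Type*} [NonUnitalCStarAlgebra B] (φ : B ≃⋆ₐ[ℂ] B) (u a : B)

theorem StarAlgEquiv.norm_apply_mul_sub : ‖φ u * a - a‖ = ‖u * φ.symm a - φ.symm a‖ := by
  conv_lhs => rw [← φ.apply_symm_apply a, ← map_mul, ← map_sub, norm_map]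

theorem StarAlgEquiv.norm_mul_apply_sub : ‖a * φ u - a‖ = ‖φ.symm a * u - φ.symm a‖ := by
  conv_lhs => rw [← φ.apply_symm_apply a, ← map_mul, ← map_sub, norm_map]

noncomputable def orbitAverage {G : Type*} [Fintype G] (α : G → B ≃⋆ₐ[ℂ] B) (x : B) : B :=
  (Fintype.card G : ℝ)⁻¹ • ∑ g, α g x

end Automorphisms

theorem orbitAverage_mem_fixedPts {G : Type*} [Group G] [Fintype G] (α : G → A ≃⋆ₐ[ℂ] A)
    (hα : ∀ g h x, α (g * h) x = α g (α h x)) (x : A) :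
    orbitAverage α x ∈ fixedPts α := by
  intro h
  rw [orbitAverage, LinearMapClass.map_smul_of_tower, map_sum]
  congr 1
  exact Fintype.sum_equiv (Equiv.mulLeft h) _ _ fun g => (hα h g x).symm

theorem exists_approximateUnit_of_finite {ι : Type*} [Finite ι] (b : ι → A) {ε : ℝ} (hε : 0 < ε) :
    ∃ u : A, 0 ≤ u ∧ ‖u‖ ≤ 1 ∧ ∀ i, ‖u * b i - b i‖ < ε ∧ ‖b i * u - b i‖ < ε := by
  have hl := CStarAlgebra.increasingApproximateUnit A
  have : (CStarAlgebra.approximateUnit A).NeBot := hl.neBot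
  have hb : ∀ᶠ u in CStarAlgebra.approximateUnit A,
      ∀ i, ‖u * b i - b i‖ < ε ∧ ‖b i * u - b i‖ < ε := by
    refine Filter.eventually_all.2 fun i => ?_
    filter_upwards [hl.tendsto_mul_right (b i) (Metric.ball_mem_nhds _ hε),
      hl.tendsto_mul_left (b i) (Metric.ball_mem_nhds _ hε)] with u hu₁ hu₂
    exact ⟨by simpa [dist_eq_norm] using hu₁, by simpa [dist_eq_norm] using hu₂⟩
  exact (hl.eventually_nonneg.and (hl.eventually_norm.and hb)).exists

/-- Let `A` be a C*-algebra, `G` a finite group, and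
`α : G → Aut(A)` an action of `G` on `A`.  Then the fixed point algebra `A^α` contains
an approximate unit for `A`: for every finite set `F ⊆ A` and every `ε > 0` there is a
positive contraction `v ∈ A^α` with `‖v * a - a‖ < ε` and `‖a * v - a‖ < ε` for all
`a ∈ F`. -/
theorem fixedPts_contains_approximate_unit
    {G : Type*} [Group G] [Fintype G]
    (α : G → A ≃⋆ₐ[ℂ] A) (hα : ∀ g h x, α (g * h) x = α g (α h x))
    (F : Finset A) (ε : ℝ) (hε : 0 < ε) :
    ∃ v : A, v ∈ fixedPts α ∧ 0 ≤ v ∧ ‖v‖ ≤ 1 ∧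
      ∀ a ∈ F, ‖v * a - a‖ < ε ∧ ‖a * v - a‖ < ε := by
  obtain ⟨u, hu_nonneg, hu_norm, hu⟩ :=
    exists_approximateUnit_of_finite (fun p : G × F => (α p.1).symm p.2) hε
  refine ⟨orbitAverage α u, orbitAverage_mem_fixedPts α hα u, ?_, ?_, fun a ha => ⟨?_, ?_⟩⟩
  · exact (convex_Ici 0).inv_card_smul_sum_mem fun g => map_nonneg (α g) hu_nonneg
  · refine mem_closedBall_zero_iff.1 ((convex_closedBall 0 1).inv_card_smul_sum_mem fun g => ?_)
    simpa [StarAlgEquiv.norm_map] using hu_norm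
  · refine (convex_setOf_norm_mul_sub_lt a ε).inv_card_smul_sum_mem fun g => ?_
    simpa [StarAlgEquiv.norm_apply_mul_sub] using (hu (g, ⟨a, ha⟩)).1
  · refine (convex_setOf_norm_mul_sub_lt' a ε).inv_card_smul_sum_mem fun g => ?_
    simpa [StarAlgEquiv.norm_mul_apply_sub] using (hu (g, ⟨a, ha⟩)).2
end
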